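/- arXiv:2107.03754 — 3 statements merged into one kernel-verified Lean document; each statement's English description precedes it below -/
import Mathlib

section
/- For all x1, x2 ∈ Q1 it holds that ‖u(x1) − u(x2)‖ ≤ (L1·L2/σ2)·‖x1 − x2‖, and for all p1, p2 ∈ Q2 it holds that ‖v(p1) − v(p2)‖ ≤ (L1·L2/σ1)·‖p1 − p2‖. -/
open Finset Filter

/-- `F₀` is `β`-strongly convex on `Q` w.r.t. the norm-like function `Nrm`. -/
def StrongConvexOnW {V : Type*} [AddCommGroup V] [Module ℝ V]
    (Q : Set V) (Nrm : V → ℝ) (β : ℝ) (F₀ : V → ℝ) : Prop :=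
  ∀ ⦃x⦄, x ∈ Q → ∀ ⦃y⦄, y ∈ Q → ∀ ⦃α : ℝ⦄, 0 ≤ α → α ≤ 1 →
    F₀ (α • x + (1 - α) • y) ≤
      α * F₀ x + (1 - α) * F₀ y - α * (1 - α) * (β / 2) * Nrm (x - y) ^ 2

/-- `zt` is a `δ`-inexact solution of `min_{z ∈ Q} F₀ z`, where `zs` is the exact minimizer. -/
def InexactSol {V : Type*} [NormedAddCommGroup V] [NormedSpace ℝ V]
    (Q : Set V) (F₀ : V → ℝ) (zs zt : V) (δ : ℝ) : Prop :=
  zt ∈ Q ∧ ∃ g : V →L[ℝ] ℝ, (∀ y ∈ Q, F₀ zt + g (y - zt) ≤ F₀ y) ∧ -δ ≤ g (zs - zt)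

/-- The dual norm of `normH` w.r.t. the standard inner product on `ℝ^m`. -/
noncomputable def dualNormH {m : ℕ} (normH : (Fin m → ℝ) → ℝ) (z : Fin m → ℝ) : ℝ :=
  sSup {r | ∃ y, normH y ≤ 1 ∧ r = ∑ j, z j * y j}

lemma aux_norm_le_const {V : Type*} [NormedAddCommGroup V] [NormedSpace ℝ V]
    [FiniteDimensional ℝ V]
    (N : V → ℝ) (hdef : ∀ y, N y = 0 → y = 0)
    (hhom : ∀ (c : ℝ) (y : V), N (c • y) = |c| * N y)
    (htri : ∀ y z, N (y + z) ≤ N y + N z) :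
    ∃ C : ℝ, 0 < C ∧ ∀ y, ‖y‖ ≤ C * N y := by
  have h0 : N 0 = 0 := by
    have := hhom 0 0; simpa using this
  have hneg : ∀ y, N (-y) = N y := by
    intro y
    have := hhom (-1) y; simpa using this
  have hnonneg : ∀ y, 0 ≤ N y := by
    intro y
    have := htri y (-y)
    rw [add_neg_cancel, h0, hneg] at this
    linarith
  obtain ⟨K, hK0, hK⟩ : ∃ K : ℝ, 0 ≤ K ∧ ∀ y, N y ≤ K * ‖y‖ := by
    set b := Module.finBasis ℝ V
    set K := ∑ i, N (b i) * ‖(b.coord i).toContinuousLinearMap‖ with hKdef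
    refine ⟨K, Finset.sum_nonneg fun i _ => mul_nonneg (hnonneg _) (norm_nonneg _), fun y => ?_⟩
    have hy : y = ∑ i, b.repr y i • b i := (b.sum_repr y).symm
    calc N y = N (∑ i, b.repr y i • b i) := by rw [← hy]
      _ ≤ ∑ i, N (b.repr y i • b i) := Finset.le_sum_of_subadditive N h0.le htri _ _
      _ ≤ ∑ i, (N (b i) * ‖(b.coord i).toContinuousLinearMap‖) * ‖y‖ := by
          refine Finset.sum_le_sum fun i _ => ?_
          rw [hhom]
          have h1 : |b.repr y i| ≤ ‖(b.coord i).toContinuousLinearMap‖ * ‖y‖ := by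
            have := (b.coord i).toContinuousLinearMap.le_opNorm y
            simpa [Real.norm_eq_abs] using this
          calc |b.repr y i| * N (b i) ≤ (‖(b.coord i).toContinuousLinearMap‖ * ‖y‖) * N (b i) :=
                mul_le_mul_of_nonneg_right h1 (hnonneg _)
            _ = N (b i) * ‖(b.coord i).toContinuousLinearMap‖ * ‖y‖ := by ring
      _ = K * ‖y‖ := by rw [← Finset.sum_mul]
  have hcont : Continuous N := by
    have hlip : LipschitzWith (Real.toNNReal K) N := by
      refine LipschitzWith.of_dist_le_mul fun a c => ?_
      rw [Real.dist_eq, dist_eq_norm]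
      have h1 : N a - N c ≤ N (a - c) := by
        have := htri (a - c) c; simp only [sub_add_cancel] at this; linarith
      have h2 : N c - N a ≤ N (a - c) := by
        have := htri (c - a) a; simp only [sub_add_cancel] at this
        have : N c ≤ N (c - a) + N a := by linarith
        have h3 : N (c - a) = N (a - c) := by rw [← neg_sub a c, hneg]
        linarith
      calc |N a - N c| ≤ N (a - c) := abs_sub_le_iff.mpr ⟨h1, h2⟩
        _ ≤ K * ‖a - c‖ := hK _
        _ = (Real.toNNReal K : ℝ) * ‖a - c‖ := by rw [Real.coe_toNNReal K hK0]
    exact hlip.continuous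
  rcases subsingleton_or_nontrivial V with hV | hV
  · refine ⟨1, one_pos, fun y => ?_⟩
    rw [Subsingleton.elim y 0]; simp [h0]
  · have hsph : (Metric.sphere (0 : V) 1).Nonempty := NormedSpace.sphere_nonempty.mpr zero_le_one
    obtain ⟨y0, hy0mem, hy0min⟩ :=
      (isCompact_sphere (0 : V) 1).exists_isMinOn hsph hcont.continuousOn
    have hy0norm : ‖y0‖ = 1 := by simpa using hy0mem
    have hy0ne : y0 ≠ 0 := by
      intro hh; rw [hh] at hy0norm; simp at hy0norm
    have hc : 0 < N y0 :=
      lt_of_le_of_ne (hnonneg y0) (fun hh => hy0ne (hdef y0 hh.symm))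
    refine ⟨(N y0)⁻¹, inv_pos.mpr hc, fun y => ?_⟩
    rcases eq_or_ne y 0 with rfl | hy
    · simp [h0]
    · have hyn : 0 < ‖y‖ := norm_pos_iff.mpr hy
      have hmem : ‖y‖⁻¹ • y ∈ Metric.sphere (0 : V) 1 := by
        simp [norm_smul, abs_of_nonneg (le_of_lt (inv_pos.mpr hyn)),
          inv_mul_cancel₀ hyn.ne']
      have hge : N y0 ≤ N (‖y‖⁻¹ • y) := isMinOn_iff.mp hy0min _ hmem
      rw [hhom, abs_of_nonneg (le_of_lt (inv_pos.mpr hyn))] at hge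
      have hmul : ‖y‖ * N y0 ≤ N y := by
        have := mul_le_mul_of_nonneg_left hge hyn.le
        rw [← mul_assoc, mul_inv_cancel₀ hyn.ne', one_mul] at this
        linarith
      rw [inv_mul_eq_div, le_div_iff₀ hc]
      linarith

lemma aux_pairing {m : ℕ} (normH : (Fin m → ℝ) → ℝ)
    (hNpos : ∀ y, 0 ≤ normH y)
    (hNdef : ∀ y, normH y = 0 → y = 0)
    (hNhom : ∀ (c : ℝ) (y : Fin m → ℝ), normH (c • y) = |c| * normH y)
    (hNtri : ∀ y z, normH (y + z) ≤ normH y + normH z)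
    (z w : Fin m → ℝ) :
    ∑ j, z j * w j ≤ dualNormH normH z * normH w := by
  obtain ⟨C, hC0, hC⟩ := aux_norm_le_const normH hNdef hNhom hNtri
  have h0 : normH 0 = 0 := by have := hNhom 0 0; simpa using this
  have hbdd : BddAbove {r | ∃ y, normH y ≤ 1 ∧ r = ∑ j, z j * y j} := by
    refine ⟨(m : ℝ) * ‖z‖ * C, ?_⟩
    rintro r ⟨y, hy, rfl⟩
    have hyC : ‖y‖ ≤ C := by
      calc ‖y‖ ≤ C * normH y := hC y
        _ ≤ C * 1 := mul_le_mul_of_nonneg_left hy hC0.le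
        _ = C := mul_one C
    calc ∑ j, z j * y j ≤ ∑ j : Fin m, ‖z‖ * C := by
          refine Finset.sum_le_sum fun j _ => ?_
          calc z j * y j ≤ |z j * y j| := le_abs_self _
            _ = |z j| * |y j| := abs_mul _ _
            _ ≤ ‖z‖ * C := by
                refine mul_le_mul ?_ ?_ (abs_nonneg _) (norm_nonneg _)
                · exact (norm_le_pi_norm z j)
                · exact le_trans (norm_le_pi_norm y j) hyC
      _ = (m : ℝ) * ‖z‖ * C := by simp [mul_assoc]
  rcases eq_or_lt_of_le (hNpos w) with hw0 | hwpos
  · have hw : w = 0 := hNdef w hw0.symm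
    subst hw
    simp [h0]
  · set y := (normH w)⁻¹ • w with hy
    have hy1 : normH y ≤ 1 := by
      rw [hy, hNhom, abs_of_nonneg (inv_pos.mpr hwpos).le, inv_mul_cancel₀ hwpos.ne']
    have hmem : (∑ j, z j * y j) ∈ {r | ∃ y, normH y ≤ 1 ∧ r = ∑ j, z j * y j} :=
      ⟨y, hy1, rfl⟩
    have hle := le_csSup hbdd hmem
    have heq : ∑ j, z j * y j = (normH w)⁻¹ * ∑ j, z j * w j := by
      rw [Finset.mul_sum]
      refine Finset.sum_congr rfl fun j _ => ?_
      simp [hy, Pi.smul_apply, smul_eq_mul]; ring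
    rw [heq] at hle
    rw [mul_comm]
    calc ∑ j, z j * w j = normH w * ((normH w)⁻¹ * ∑ j, z j * w j) := by
          rw [← mul_assoc, mul_inv_cancel₀ hwpos.ne', one_mul]
      _ ≤ normH w * dualNormH normH z := mul_le_mul_of_nonneg_left hle hwpos.le

lemma aux_strongMin {V : Type*} [NormedAddCommGroup V] [NormedSpace ℝ V]
    {Q : Set V} (hQcv : Convex ℝ Q) {β : ℝ} (hβ : 0 ≤ β) {F₀ : V → ℝ}
    (hsc : StrongConvexOnW Q (fun x => ‖x‖) β F₀)
    {ps : V} (hps : ps ∈ Q) (hmin : ∀ p ∈ Q, F₀ ps ≤ F₀ p)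
    {p : V} (hp : p ∈ Q) :
    F₀ ps + β / 2 * ‖p - ps‖ ^ 2 ≤ F₀ p := by
  set c : ℝ := β / 2 * ‖p - ps‖ ^ 2 with hc
  have hc0 : 0 ≤ c := by positivity
  have key : ∀ α : ℝ, 0 < α → α ≤ 1 → F₀ ps + (1 - α) * c ≤ F₀ p := by
    intro α hα hα1
    have hmem : α • p + (1 - α) • ps ∈ Q :=
      hQcv hp hps hα.le (by linarith) (by ring)
    have h1 := hsc hp hps hα.le hα1
    have h2 := hmin _ hmem
    have h3 : α * (F₀ ps + (1 - α) * c) ≤ α * F₀ p := by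
      simp only [hc] at *
      nlinarith
    exact le_of_mul_le_mul_left h3 hα
  have htend : Tendsto (fun α : ℝ => F₀ ps + (1 - α) * c) (nhdsWithin 0 (Set.Ioi 0))
      (nhds (F₀ ps + c)) := by
    have hco : Continuous (fun α : ℝ => F₀ ps + (1 - α) * c) := by continuity
    have := hco.tendsto 0
    simp only [sub_zero, one_mul] at this
    exact this.mono_left nhdsWithin_le_nhds
  refine le_of_tendsto htend ?_
  filter_upwards [Ioo_mem_nhdsGT_of_mem (Set.mem_Ico.mpr ⟨le_refl (0:ℝ), one_pos⟩)] with α hα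
  exact key α hα.1 hα.2.le

/-- the exact alternating-minimization operators `u` and `v` are Lipschitz
with moduli `L1·L2/σ2` and `L1·L2/σ1`, respectively. -/
theorem exact_operators_lipschitz
    {E F : Type*} [NormedAddCommGroup E] [NormedSpace ℝ E] [FiniteDimensional ℝ E]
    [NormedAddCommGroup F] [NormedSpace ℝ F] [FiniteDimensional ℝ F]
    {m : ℕ} (normH : (Fin m → ℝ) → ℝ)
    (hNpos : ∀ y, 0 ≤ normH y)
    (hNdef : ∀ y, normH y = 0 → y = 0)
    (hNhom : ∀ (c : ℝ) (y : Fin m → ℝ), normH (c • y) = |c| * normH y)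
    (hNtri : ∀ y z, normH (y + z) ≤ normH y + normH z)
    {Q1 : Set E} {Q2 : Set F}
    (hQ1ne : Q1.Nonempty) (hQ1cp : IsCompact Q1) (hQ1cv : Convex ℝ Q1)
    (hQ2ne : Q2.Nonempty) (hQ2cp : IsCompact Q2) (hQ2cv : Convex ℝ Q2)
    (f : E → ℝ) (h : F → ℝ) (σ1 σ2 : ℝ) (hσ1 : 0 < σ1) (hσ2 : 0 < σ2)
    (hfct : ContinuousOn f Q1) (hfsc : StrongConvexOnW Q1 (fun x => ‖x‖) σ1 f)
    (hhct : ContinuousOn h Q2) (hhsc : StrongConvexOnW Q2 (fun p => ‖p‖) σ2 h)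
    (G1 : E → Fin m → ℝ) (G2 : F → Fin m → ℝ)
    (L1 L2 : ℝ) (hL1 : 0 ≤ L1) (hL2 : 0 ≤ L2)
    (hG1 : ∀ x1 ∈ Q1, ∀ x2 ∈ Q1, dualNormH normH (G1 x1 - G1 x2) ≤ L1 * ‖x1 - x2‖)
    (hG2 : ∀ p1 ∈ Q2, ∀ p2 ∈ Q2, normH (G2 p1 - G2 p2) ≤ L2 * ‖p1 - p2‖)
    (Φ : E → F → ℝ)
    (hΦ : ∀ x p, Φ x p = f x + (∑ j, G1 x j * G2 p j) + h p)
    (hcvx1 : ∀ p ∈ Q2, ConvexOn ℝ Q1 (fun x => ∑ j, G1 x j * G2 p j))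
    (hcvx2 : ∀ x ∈ Q1, ConvexOn ℝ Q2 (fun p => ∑ j, G1 x j * G2 p j))
    (u : E → F) (v : F → E)
    (hu : ∀ x ∈ Q1, u x ∈ Q2 ∧ ∀ p ∈ Q2, Φ x (u x) ≤ Φ x p)
    (huu : ∀ x ∈ Q1, ∀ p ∈ Q2, (∀ q ∈ Q2, Φ x p ≤ Φ x q) → p = u x)
    (hv : ∀ p ∈ Q2, v p ∈ Q1 ∧ ∀ x ∈ Q1, Φ (v p) p ≤ Φ x p)
    (hvv : ∀ p ∈ Q2, ∀ x ∈ Q1, (∀ y ∈ Q1, Φ x p ≤ Φ y p) → x = v p)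
    :
    (∀ x1 ∈ Q1, ∀ x2 ∈ Q1, ‖u x1 - u x2‖ ≤ L1 * L2 / σ2 * ‖x1 - x2‖) ∧
    (∀ p1 ∈ Q2, ∀ p2 ∈ Q2, ‖v p1 - v p2‖ ≤ L1 * L2 / σ1 * ‖p1 - p2‖) := by
  -- strong convexity of the partial maps
  have hscΦ2 : ∀ x ∈ Q1, StrongConvexOnW Q2 (fun p => ‖p‖) σ2 (Φ x) := by
    intro x hx p hp q hq α hα hα1
    have hS := (hcvx2 x hx).2 hp hq hα (show (0:ℝ) ≤ 1 - α by linarith) (show α + (1 - α) = 1 by ring)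
    simp only [smul_eq_mul] at hS
    have hH := hhsc hp hq hα hα1
    rw [hΦ, hΦ, hΦ]
    have expand : α * (f x + (∑ j, G1 x j * G2 p j) + h p)
        + (1 - α) * (f x + (∑ j, G1 x j * G2 q j) + h q)
        = f x + (α * (∑ j, G1 x j * G2 p j) + (1 - α) * (∑ j, G1 x j * G2 q j))
          + (α * h p + (1 - α) * h q) := by ring
    linarith
  have hscΦ1 : ∀ p ∈ Q2, StrongConvexOnW Q1 (fun x => ‖x‖) σ1 (fun x => Φ x p) := by
    intro p hp x hx y hy α hα hα1
    have hS := (hcvx1 p hp).2 hx hy hα (show (0:ℝ) ≤ 1 - α by linarith) (show α + (1 - α) = 1 by ring)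
    simp only [smul_eq_mul] at hS
    have hF := hfsc hx hy hα hα1
    simp only [hΦ]
    have expand : α * (f x + (∑ j, G1 x j * G2 p j) + h p)
        + (1 - α) * (f y + (∑ j, G1 y j * G2 p j) + h p)
        = (α * f x + (1 - α) * f y)
          + (α * (∑ j, G1 x j * G2 p j) + (1 - α) * (∑ j, G1 y j * G2 p j))
          + h p := by ring
    linarith
  constructor
  · intro x1 hx1 x2 hx2
    obtain ⟨hp1Q, hp1min⟩ := hu x1 hx1
    obtain ⟨hp2Q, hp2min⟩ := hu x2 hx2
    set p1 := u x1 with hp1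
    set p2 := u x2 with hp2
    have key1 := aux_strongMin hQ2cv hσ2.le (hscΦ2 x1 hx1) hp1Q hp1min hp2Q
    have key2 := aux_strongMin hQ2cv hσ2.le (hscΦ2 x2 hx2) hp2Q hp2min hp1Q
    have hnormsym : ‖p2 - p1‖ = ‖p1 - p2‖ := norm_sub_rev _ _
    have hsum : σ2 * ‖p1 - p2‖ ^ 2 ≤ ∑ j, (G1 x1 - G1 x2) j * (G2 p2 - G2 p1) j := by
      have e1 := hΦ x1 p1
      have e2 := hΦ x1 p2
      have e3 := hΦ x2 p1
      have e4 := hΦ x2 p2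
      have hexpand : ∑ j, (G1 x1 - G1 x2) j * (G2 p2 - G2 p1) j
          = (∑ j, G1 x1 j * G2 p2 j) - (∑ j, G1 x1 j * G2 p1 j)
            - (∑ j, G1 x2 j * G2 p2 j) + (∑ j, G1 x2 j * G2 p1 j) := by
        rw [← Finset.sum_sub_distrib, ← Finset.sum_sub_distrib, ← Finset.sum_add_distrib]
        refine Finset.sum_congr rfl fun j _ => ?_
        simp only [Pi.sub_apply]; ring
      rw [hexpand]
      rw [e1, e2] at key1
      rw [e3, e4] at key2
      rw [hnormsym] at key1
      linarith
    have hpair := aux_pairing normH hNpos hNdef hNhom hNtri (G1 x1 - G1 x2) (G2 p2 - G2 p1)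
    have hb1 := hG1 x1 hx1 x2 hx2
    have hb2 := hG2 p2 hp2Q p1 hp1Q
    have hfinal : σ2 * ‖p1 - p2‖ ^ 2 ≤ (L1 * ‖x1 - x2‖) * (L2 * ‖p2 - p1‖) :=
      le_trans (le_trans hsum hpair)
        (mul_le_mul hb1 hb2 (hNpos _) (by positivity))
    rw [hnormsym] at hfinal
    rcases eq_or_lt_of_le (norm_nonneg (p1 - p2)) with hz | hz
    · rw [← hz]; positivity
    · have h5 : σ2 * ‖p1 - p2‖ ≤ L1 * L2 * ‖x1 - x2‖ := by nlinarith
      rw [div_mul_eq_mul_div, le_div_iff₀ hσ2]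
      linarith
  · intro p1 hp1 p2 hp2
    obtain ⟨hx1Q, hx1min⟩ := hv p1 hp1
    obtain ⟨hx2Q, hx2min⟩ := hv p2 hp2
    set x1 := v p1 with hx1
    set x2 := v p2 with hx2
    have key1 := aux_strongMin hQ1cv hσ1.le (hscΦ1 p1 hp1) hx1Q hx1min hx2Q
    have key2 := aux_strongMin hQ1cv hσ1.le (hscΦ1 p2 hp2) hx2Q hx2min hx1Q
    have hnormsym : ‖x2 - x1‖ = ‖x1 - x2‖ := norm_sub_rev _ _
    have hsum : σ1 * ‖x1 - x2‖ ^ 2 ≤ ∑ j, (G1 x1 - G1 x2) j * (G2 p2 - G2 p1) j := by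
      have e1 := hΦ x1 p1
      have e2 := hΦ x2 p1
      have e3 := hΦ x1 p2
      have e4 := hΦ x2 p2
      have hexpand : ∑ j, (G1 x1 - G1 x2) j * (G2 p2 - G2 p1) j
          = (∑ j, G1 x1 j * G2 p2 j) - (∑ j, G1 x1 j * G2 p1 j)
            - (∑ j, G1 x2 j * G2 p2 j) + (∑ j, G1 x2 j * G2 p1 j) := by
        rw [← Finset.sum_sub_distrib, ← Finset.sum_sub_distrib, ← Finset.sum_add_distrib]
        refine Finset.sum_congr rfl fun j _ => ?_
        simp only [Pi.sub_apply]; ring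
      rw [hexpand]
      rw [e1, e2] at key1
      rw [e3, e4] at key2
      rw [hnormsym] at key1
      linarith
    have hpair := aux_pairing normH hNpos hNdef hNhom hNtri (G1 x1 - G1 x2) (G2 p2 - G2 p1)
    have hb1 := hG1 x1 hx1Q x2 hx2Q
    have hb2 := hG2 p2 hp2 p1 hp1
    have hfinal : σ1 * ‖x1 - x2‖ ^ 2 ≤ (L1 * ‖x1 - x2‖) * (L2 * ‖p2 - p1‖) :=
      le_trans (le_trans hsum hpair)
        (mul_le_mul hb1 hb2 (hNpos _) (by positivity))
    have hpsym : ‖p2 - p1‖ = ‖p1 - p2‖ := norm_sub_rev _ _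
    rw [hpsym] at hfinal
    rcases eq_or_lt_of_le (norm_nonneg (x1 - x2)) with hz | hz
    · rw [← hz]; positivity
    · have h5 : σ1 * ‖x1 - x2‖ ≤ L1 * L2 * ‖p1 - p2‖ := by nlinarith
      rw [div_mul_eq_mul_div, le_div_iff₀ hσ1]
      linarith
end

section
/- Let x1, x2 ∈ Q1 and let p̃1 and p̃2 be δ1-inexact solutions of min_{p∈Q2} Φ(x1,p) and min_{p∈Q2} Φ(x2,p), respectively. Then ‖p̃1 − p̃2‖ ≤ 2·√(2δ1/σ2) + (L1·L2/σ2)·‖x1 − x2‖. Likewise, if p1, p2 ∈ Q2 and x̃1, x̃2 are δ2-inexact solutions of min_{x∈Q1} Φ(x,p1) and min_{x∈Q1} Φ(x,p2), respectively, then ‖x̃1 − x̃2‖ ≤ 2·√(2δ2/σ1) + (L1·L2/σ1)·‖p1 − p2‖. -/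
open Finset Filter

lemma sc_div {C D : ℝ} (hC : 0 ≤ C)
    (hyp : ∀ α : ℝ, 0 < α → α ≤ 1 → (1 - α) * C ≤ D) : C ≤ D := by
  rcases hC.lt_or_eq with h0 | h0
  · refine le_of_forall_pos_le_add fun ε hε => ?_
    have hm : 0 < min 1 (ε / C) := lt_min one_pos (div_pos hε h0)
    have h1 := hyp _ hm (min_le_left _ _)
    have h2 : min 1 (ε / C) * C ≤ ε := by
      calc min 1 (ε / C) * C ≤ (ε / C) * C :=
            mul_le_mul_of_nonneg_right (min_le_right _ _) hC
        _ = ε := div_mul_cancel₀ _ h0.ne'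
    nlinarith [h1, h2]
  · rw [← h0]
    simpa using hyp 1 one_pos le_rfl

lemma sc_min {V : Type*} [NormedAddCommGroup V] [NormedSpace ℝ V]
    {Q : Set V} (hQ : Convex ℝ Q) {σ : ℝ} (hσ : 0 ≤ σ) {F₀ : V → ℝ}
    (hsc : StrongConvexOnW Q (fun x => ‖x‖) σ F₀)
    {zs z : V} (hzs : zs ∈ Q) (hz : z ∈ Q)
    (hmin : ∀ y ∈ Q, F₀ zs ≤ F₀ y) :
    F₀ zs + σ / 2 * ‖z - zs‖ ^ 2 ≤ F₀ z := by
  have key : σ / 2 * ‖z - zs‖ ^ 2 ≤ F₀ z - F₀ zs := by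
    apply sc_div (by positivity)
    intro α hα hα1
    have hmem : α • z + (1 - α) • zs ∈ Q := hQ hz hzs hα.le (by linarith) (by ring)
    have h1 := hsc hz hzs hα.le hα1
    have h2 := hmin _ hmem
    dsimp only at h1
    nlinarith [h1, h2, hα]
  linarith

lemma inexact_dist {V : Type*} [NormedAddCommGroup V] [NormedSpace ℝ V]
    {Q : Set V} (hQ : Convex ℝ Q) {σ : ℝ} (hσ : 0 < σ) {F₀ : V → ℝ}
    (hsc : StrongConvexOnW Q (fun x => ‖x‖) σ F₀)
    {zs zt : V} (hzs : zs ∈ Q)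
    (hmin : ∀ y ∈ Q, F₀ zs ≤ F₀ y)
    {δ : ℝ} (hδ : 0 ≤ δ) (hin : InexactSol Q F₀ zs zt δ) :
    ‖zt - zs‖ ≤ Real.sqrt (2 * δ / σ) := by
  obtain ⟨hzt, g, hg, hgd⟩ := hin
  have key : σ / 2 * ‖zs - zt‖ ^ 2 ≤ δ := by
    apply sc_div (by positivity)
    intro α hα hα1
    have hmem : α • zs + (1 - α) • zt ∈ Q := hQ hzs hzt hα.le (by linarith) (by ring)
    have h1 := hsc hzs hzt hα.le hα1
    have h2 := hg _ hmem
    have h3 : α • zs + (1 - α) • zt - zt = α • (zs - zt) := by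
      rw [sub_smul, one_smul, smul_sub]; abel
    rw [h3, map_smul, smul_eq_mul] at h2
    have h4 := hmin zt hzt
    dsimp only at h1
    nlinarith [h1, h2, h4, hgd, hα, mul_le_mul_of_nonneg_left hgd hα.le]
  have h6 : ‖zt - zs‖ ^ 2 ≤ 2 * δ / σ := by
    rw [norm_sub_rev, le_div_iff₀ hσ]
    nlinarith [key]
  calc ‖zt - zs‖ = Real.sqrt (‖zt - zs‖ ^ 2) := (Real.sqrt_sq (norm_nonneg _)).symm
    _ ≤ Real.sqrt (2 * δ / σ) := Real.sqrt_le_sqrt h6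

lemma pairing_le {m : ℕ} {normH : (Fin m → ℝ) → ℝ}
    (hNpos : ∀ y, 0 ≤ normH y)
    (hNdef : ∀ y, normH y = 0 → y = 0)
    (hNhom : ∀ (c : ℝ) (y : Fin m → ℝ), normH (c • y) = |c| * normH y)
    (hNtri : ∀ y z, normH (y + z) ≤ normH y + normH z)
    (z y : Fin m → ℝ) :
    ∑ j, z j * y j ≤ dualNormH normH z * normH y := by
  have hN0 : normH 0 = 0 := by
    have := hNhom 0 0; simpa using this
  obtain ⟨c, hc, hlow⟩ : ∃ c > 0, ∀ w : Fin m → ℝ, c * ‖w‖ ≤ normH w := by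
    rcases Nat.eq_zero_or_pos m with hm | hm
    · refine ⟨1, one_pos, fun w => ?_⟩
      have hw : w = 0 := funext fun i => absurd i.2 (by omega)
      simp [hw, hN0]
    · have hsum : ∀ (s : Finset (Fin m)) (w : Fin m → Fin m → ℝ),
          normH (∑ j ∈ s, w j) ≤ ∑ j ∈ s, normH (w j) := by
        intro s w
        induction s using Finset.induction_on with
        | empty => simp [hN0]
        | insert j s hj ih =>
          rw [Finset.sum_insert hj, Finset.sum_insert hj]
          exact (hNtri _ _).trans (by linarith)
      have hbound : ∀ w : Fin m → ℝ, normH w ≤ (∑ j, normH (Pi.single j 1)) * ‖w‖ := by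
        intro w
        have hw : w = ∑ j, w j • (Pi.single j 1 : Fin m → ℝ) := by
          funext i
          simp [Finset.sum_apply, Pi.single_apply, mul_ite]
        calc normH w = normH (∑ j, w j • (Pi.single j 1 : Fin m → ℝ)) := by rw [← hw]
          _ ≤ ∑ j, normH (w j • (Pi.single j 1 : Fin m → ℝ)) := hsum _ _
          _ = ∑ j, |w j| * normH (Pi.single j (1:ℝ)) := by simp [hNhom]
          _ ≤ ∑ j, ‖w‖ * normH (Pi.single j (1:ℝ)) := by
              refine Finset.sum_le_sum fun j _ => ?_
              exact mul_le_mul_of_nonneg_right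
                (by simpa using norm_le_pi_norm w j) (hNpos _)
          _ = (∑ j, normH (Pi.single j (1:ℝ))) * ‖w‖ := by
              rw [Finset.sum_mul]
              exact Finset.sum_congr rfl fun j _ => mul_comm _ _
      have hK : 0 ≤ ∑ j, normH (Pi.single j (1:ℝ)) := Finset.sum_nonneg fun j _ => hNpos _
      have hcont : Continuous normH := by
        refine (LipschitzWith.of_dist_le_mul (K := (∑ j, normH (Pi.single j (1:ℝ))).toNNReal)
          fun a b => ?_).continuous
        have h1 : normH a ≤ normH b + normH (a - b) := by
          have := hNtri b (a - b); simpa using this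
        have h2 : normH b ≤ normH a + normH (b - a) := by
          have := hNtri a (b - a); simpa using this
        have h3 := hbound (a - b)
        have h4 := hbound (b - a)
        have hrev : ‖b - a‖ = ‖a - b‖ := norm_sub_rev _ _
        have hco : ((∑ j, normH (Pi.single j (1:ℝ))).toNNReal : ℝ)
            = ∑ j, normH (Pi.single j (1:ℝ)) := Real.coe_toNNReal _ hK
        rw [Real.dist_eq, dist_eq_norm, hco, abs_le]
        constructor <;> nlinarith [h1, h2, h3, h4]
      have hne : (Metric.sphere (0 : Fin m → ℝ) 1).Nonempty := by
        haveI : Nonempty (Fin m) := ⟨⟨0, hm⟩⟩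
        exact NormedSpace.sphere_nonempty.mpr zero_le_one
      obtain ⟨y₀, hy₀m, hy₀min⟩ :=
        (isCompact_sphere (0 : Fin m → ℝ) 1).exists_isMinOn hne hcont.continuousOn
      have hy₀n : ‖y₀‖ = 1 := by simpa using hy₀m
      have hy₀pos : 0 < normH y₀ := by
        rcases (hNpos y₀).lt_or_eq with hlt | heq
        · exact hlt
        · exfalso
          have := hNdef y₀ heq.symm
          rw [this] at hy₀n; simp at hy₀n
      refine ⟨normH y₀, hy₀pos, fun w => ?_⟩
      rcases eq_or_ne w 0 with rfl | hw
      · simp [hN0]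
      · have hwn : 0 < ‖w‖ := norm_pos_iff.mpr hw
        have hmem : ‖w‖⁻¹ • w ∈ Metric.sphere (0 : Fin m → ℝ) 1 := by
          simp [norm_smul, abs_of_pos (inv_pos.mpr hwn), inv_mul_cancel₀ hwn.ne']
        have hmin := isMinOn_iff.mp hy₀min _ hmem
        rw [hNhom, abs_of_pos (inv_pos.mpr hwn)] at hmin
        calc normH y₀ * ‖w‖ ≤ (‖w‖⁻¹ * normH w) * ‖w‖ :=
              mul_le_mul_of_nonneg_right hmin hwn.le
          _ = normH w := by field_simp
  have hbdd : BddAbove {r | ∃ y', normH y' ≤ 1 ∧ r = ∑ j, z j * y' j} := by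
    refine ⟨(∑ j, |z j|) * c⁻¹, ?_⟩
    rintro r ⟨y', hy', rfl⟩
    have hy'n : ‖y'‖ ≤ c⁻¹ := by
      have h1 := (hlow y').trans hy'
      rw [inv_eq_one_div, le_div_iff₀ hc]
      nlinarith [h1]
    have hterm : ∀ j : Fin m, z j * y' j ≤ |z j| * c⁻¹ := by
      intro j
      have h1 : z j * y' j ≤ |z j| * |y' j| := by
        rw [← abs_mul]; exact le_abs_self _
      have h2' : |y' j| ≤ ‖y'‖ := by simpa using norm_le_pi_norm y' j
      have h2 : |y' j| ≤ c⁻¹ := h2'.trans hy'n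
      have h3 := mul_le_mul_of_nonneg_left h2 (abs_nonneg (z j))
      linarith
    calc ∑ j, z j * y' j ≤ ∑ j, |z j| * c⁻¹ := Finset.sum_le_sum fun j _ => hterm j
      _ = (∑ j, |z j|) * c⁻¹ := (Finset.sum_mul _ _ _).symm
  rcases (hNpos y).lt_or_eq with hy | hy
  · have hmem : (∑ j, z j * ((normH y)⁻¹ • y) j)
        ∈ {r | ∃ y', normH y' ≤ 1 ∧ r = ∑ j, z j * y' j} := by
      refine ⟨(normH y)⁻¹ • y, ?_, rfl⟩
      rw [hNhom, abs_of_pos (inv_pos.mpr hy), inv_mul_cancel₀ hy.ne']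
    have hle : (∑ j, z j * ((normH y)⁻¹ • y) j) ≤ dualNormH normH z :=
      le_csSup hbdd hmem
    have hexp : ∑ j, z j * ((normH y)⁻¹ • y) j = (normH y)⁻¹ * ∑ j, z j * y j := by
      rw [Finset.mul_sum]
      refine Finset.sum_congr rfl fun j _ => ?_
      simp [Pi.smul_apply]; ring
    rw [hexp] at hle
    calc ∑ j, z j * y j = normH y * ((normH y)⁻¹ * ∑ j, z j * y j) := by
          field_simp
      _ ≤ normH y * dualNormH normH z := mul_le_mul_of_nonneg_left hle hy.le
      _ = dualNormH normH z * normH y := mul_comm _ _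
  · have hy0 : y = 0 := hNdef y hy.symm
    have h0S : (0:ℝ) ∈ {r | ∃ y', normH y' ≤ 1 ∧ r = ∑ j, z j * y' j} :=
      ⟨0, by simp [hN0], by simp⟩
    have hd0 : (0:ℝ) ≤ dualNormH normH z := le_csSup hbdd h0S
    simp [hy0, hN0]

/-- inexact alternating operators are Lipschitz up to an additive error. -/
theorem inexact_operators_almost_lipschitz
    {E F : Type*} [NormedAddCommGroup E] [NormedSpace ℝ E] [FiniteDimensional ℝ E]
    [NormedAddCommGroup F] [NormedSpace ℝ F] [FiniteDimensional ℝ F]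
    {m : ℕ} (normH : (Fin m → ℝ) → ℝ)
    (hNpos : ∀ y, 0 ≤ normH y)
    (hNdef : ∀ y, normH y = 0 → y = 0)
    (hNhom : ∀ (c : ℝ) (y : Fin m → ℝ), normH (c • y) = |c| * normH y)
    (hNtri : ∀ y z, normH (y + z) ≤ normH y + normH z)
    {Q1 : Set E} {Q2 : Set F}
    (hQ1ne : Q1.Nonempty) (hQ1cp : IsCompact Q1) (hQ1cv : Convex ℝ Q1)
    (hQ2ne : Q2.Nonempty) (hQ2cp : IsCompact Q2) (hQ2cv : Convex ℝ Q2)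
    (f : E → ℝ) (h : F → ℝ) (σ1 σ2 : ℝ) (hσ1 : 0 < σ1) (hσ2 : 0 < σ2)
    (hfct : ContinuousOn f Q1) (hfsc : StrongConvexOnW Q1 (fun x => ‖x‖) σ1 f)
    (hhct : ContinuousOn h Q2) (hhsc : StrongConvexOnW Q2 (fun p => ‖p‖) σ2 h)
    (G1 : E → Fin m → ℝ) (G2 : F → Fin m → ℝ)
    (L1 L2 : ℝ) (hL1 : 0 ≤ L1) (hL2 : 0 ≤ L2)
    (hG1 : ∀ x1 ∈ Q1, ∀ x2 ∈ Q1, dualNormH normH (G1 x1 - G1 x2) ≤ L1 * ‖x1 - x2‖)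
    (hG2 : ∀ p1 ∈ Q2, ∀ p2 ∈ Q2, normH (G2 p1 - G2 p2) ≤ L2 * ‖p1 - p2‖)
    (Φ : E → F → ℝ)
    (hΦ : ∀ x p, Φ x p = f x + (∑ j, G1 x j * G2 p j) + h p)
    (hcvx1 : ∀ p ∈ Q2, ConvexOn ℝ Q1 (fun x => ∑ j, G1 x j * G2 p j))
    (hcvx2 : ∀ x ∈ Q1, ConvexOn ℝ Q2 (fun p => ∑ j, G1 x j * G2 p j))
    (u : E → F) (v : F → E)
    (hu : ∀ x ∈ Q1, u x ∈ Q2 ∧ ∀ p ∈ Q2, Φ x (u x) ≤ Φ x p)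
    (huu : ∀ x ∈ Q1, ∀ p ∈ Q2, (∀ q ∈ Q2, Φ x p ≤ Φ x q) → p = u x)
    (hv : ∀ p ∈ Q2, v p ∈ Q1 ∧ ∀ x ∈ Q1, Φ (v p) p ≤ Φ x p)
    (hvv : ∀ p ∈ Q2, ∀ x ∈ Q1, (∀ y ∈ Q1, Φ x p ≤ Φ y p) → x = v p)
    (δ1 δ2 : ℝ) (hδ1 : 0 ≤ δ1) (hδ2 : 0 ≤ δ2)
    :
    (∀ x1 ∈ Q1, ∀ x2 ∈ Q1, ∀ pt1 pt2 : F,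
      InexactSol Q2 (fun p => Φ x1 p) (u x1) pt1 δ1 →
      InexactSol Q2 (fun p => Φ x2 p) (u x2) pt2 δ1 →
      ‖pt1 - pt2‖ ≤ 2 * Real.sqrt (2 * δ1 / σ2) + L1 * L2 / σ2 * ‖x1 - x2‖) ∧
    (∀ p1 ∈ Q2, ∀ p2 ∈ Q2, ∀ xt1 xt2 : E,
      InexactSol Q1 (fun x => Φ x p1) (v p1) xt1 δ2 →
      InexactSol Q1 (fun x => Φ x p2) (v p2) xt2 δ2 →
      ‖xt1 - xt2‖ ≤ 2 * Real.sqrt (2 * δ2 / σ1) + L1 * L2 / σ1 * ‖p1 - p2‖) := by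
  -- strong convexity of the partial functions
  have hscΦ2 : ∀ x ∈ Q1, StrongConvexOnW Q2 (fun p => ‖p‖) σ2 (fun p => Φ x p) := by
    intro x hx p hp q hq α hα0 hα1
    have hb := (hcvx2 x hx).2 hp hq hα0 (show (0:ℝ) ≤ 1 - α by linarith) (by ring)
    have hh := hhsc hp hq hα0 hα1
    simp only [smul_eq_mul] at hb
    dsimp only at hb hh ⊢
    rw [hΦ, hΦ, hΦ]
    nlinarith [hb, hh]
  have hscΦ1 : ∀ p ∈ Q2, StrongConvexOnW Q1 (fun x => ‖x‖) σ1 (fun x => Φ x p) := by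
    intro p hp x hx y hy α hα0 hα1
    have hb := (hcvx1 p hp).2 hx hy hα0 (show (0:ℝ) ≤ 1 - α by linarith) (by ring)
    have hf := hfsc hx hy hα0 hα1
    simp only [smul_eq_mul] at hb
    dsimp only at hb hf ⊢
    rw [hΦ, hΦ, hΦ]
    nlinarith [hb, hf]
  -- Lipschitz property of the exact operators
  have huLip : ∀ x1 ∈ Q1, ∀ x2 ∈ Q1, ‖u x1 - u x2‖ ≤ L1 * L2 / σ2 * ‖x1 - x2‖ := by
    intro x1 hx1 x2 hx2
    obtain ⟨hu1, hm1⟩ := hu x1 hx1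
    obtain ⟨hu2, hm2⟩ := hu x2 hx2
    have h1 : Φ x1 (u x1) + σ2 / 2 * ‖u x2 - u x1‖ ^ 2 ≤ Φ x1 (u x2) :=
      sc_min hQ2cv hσ2.le (hscΦ2 x1 hx1) hu1 hu2 hm1
    have h2 : Φ x2 (u x2) + σ2 / 2 * ‖u x1 - u x2‖ ^ 2 ≤ Φ x2 (u x1) :=
      sc_min hQ2cv hσ2.le (hscΦ2 x2 hx2) hu2 hu1 hm2
    rw [norm_sub_rev] at h1
    have hpair : ∑ j, (G1 x1 - G1 x2) j * (G2 (u x2) - G2 (u x1)) j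
        ≤ (L1 * ‖x1 - x2‖) * (L2 * ‖u x1 - u x2‖) := by
      have hp1 := pairing_le hNpos hNdef hNhom hNtri (G1 x1 - G1 x2) (G2 (u x2) - G2 (u x1))
      have hp2 : dualNormH normH (G1 x1 - G1 x2) * normH (G2 (u x2) - G2 (u x1))
          ≤ (L1 * ‖x1 - x2‖) * (L2 * ‖u x2 - u x1‖) :=
        mul_le_mul (hG1 x1 hx1 x2 hx2) (hG2 (u x2) hu2 (u x1) hu1) (hNpos _) (by positivity)
      rw [norm_sub_rev (u x2)] at hp2
      exact hp1.trans hp2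
    have hexp : ∑ j, (G1 x1 - G1 x2) j * (G2 (u x2) - G2 (u x1)) j
        = (Φ x1 (u x2) - Φ x1 (u x1)) + (Φ x2 (u x1) - Φ x2 (u x2)) := by
      rw [hΦ, hΦ, hΦ, hΦ]
      simp only [Pi.sub_apply, sub_mul, mul_sub, Finset.sum_sub_distrib]
      ring
    have key : σ2 * ‖u x1 - u x2‖ ^ 2 ≤ L1 * L2 * ‖x1 - x2‖ * ‖u x1 - u x2‖ := by
      nlinarith [h1, h2, hpair, hexp]
    rcases eq_or_lt_of_le (norm_nonneg (u x1 - u x2)) with h0 | h0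
    · rw [← h0]; positivity
    · have hdiv : L1 * L2 / σ2 * ‖x1 - x2‖ * σ2 = L1 * L2 * ‖x1 - x2‖ := by
        field_simp
      nlinarith [key, mul_pos hσ2 h0, hdiv]
  have hvLip : ∀ p1 ∈ Q2, ∀ p2 ∈ Q2, ‖v p1 - v p2‖ ≤ L1 * L2 / σ1 * ‖p1 - p2‖ := by
    intro p1 hp1 p2 hp2
    obtain ⟨hv1, hm1⟩ := hv p1 hp1
    obtain ⟨hv2, hm2⟩ := hv p2 hp2
    have h1 : Φ (v p1) p1 + σ1 / 2 * ‖v p2 - v p1‖ ^ 2 ≤ Φ (v p2) p1 :=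
      sc_min hQ1cv hσ1.le (hscΦ1 p1 hp1) hv1 hv2 hm1
    have h2 : Φ (v p2) p2 + σ1 / 2 * ‖v p1 - v p2‖ ^ 2 ≤ Φ (v p1) p2 :=
      sc_min hQ1cv hσ1.le (hscΦ1 p2 hp2) hv2 hv1 hm2
    rw [norm_sub_rev] at h1
    have hpair : ∑ j, (G1 (v p2) - G1 (v p1)) j * (G2 p1 - G2 p2) j
        ≤ (L1 * ‖v p1 - v p2‖) * (L2 * ‖p1 - p2‖) := by
      have hp1' := pairing_le hNpos hNdef hNhom hNtri (G1 (v p2) - G1 (v p1)) (G2 p1 - G2 p2)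
      have hp2' : dualNormH normH (G1 (v p2) - G1 (v p1)) * normH (G2 p1 - G2 p2)
          ≤ (L1 * ‖v p2 - v p1‖) * (L2 * ‖p1 - p2‖) :=
        mul_le_mul (hG1 (v p2) hv2 (v p1) hv1) (hG2 p1 hp1 p2 hp2) (hNpos _) (by positivity)
      rw [norm_sub_rev (v p2)] at hp2'
      exact hp1'.trans hp2'
    have hexp : ∑ j, (G1 (v p2) - G1 (v p1)) j * (G2 p1 - G2 p2) j
        = (Φ (v p2) p1 - Φ (v p1) p1) + (Φ (v p1) p2 - Φ (v p2) p2) := by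
      rw [hΦ, hΦ, hΦ, hΦ]
      simp only [Pi.sub_apply, sub_mul, mul_sub, Finset.sum_sub_distrib]
      ring
    have key : σ1 * ‖v p1 - v p2‖ ^ 2 ≤ L1 * L2 * ‖p1 - p2‖ * ‖v p1 - v p2‖ := by
      nlinarith [h1, h2, hpair, hexp]
    rcases eq_or_lt_of_le (norm_nonneg (v p1 - v p2)) with h0 | h0
    · rw [← h0]; positivity
    · have hdiv : L1 * L2 / σ1 * ‖p1 - p2‖ * σ1 = L1 * L2 * ‖p1 - p2‖ := by
        field_simp
      nlinarith [key, mul_pos hσ1 h0, hdiv]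
  constructor
  · intro x1 hx1 x2 hx2 pt1 pt2 hin1 hin2
    have hd1 : ‖pt1 - u x1‖ ≤ Real.sqrt (2 * δ1 / σ2) :=
      inexact_dist hQ2cv hσ2 (hscΦ2 x1 hx1) (hu x1 hx1).1 (hu x1 hx1).2 hδ1 hin1
    have hd2 : ‖pt2 - u x2‖ ≤ Real.sqrt (2 * δ1 / σ2) :=
      inexact_dist hQ2cv hσ2 (hscΦ2 x2 hx2) (hu x2 hx2).1 (hu x2 hx2).2 hδ1 hin2
    have hL : ‖u x1 - u x2‖ ≤ L1 * L2 / σ2 * ‖x1 - x2‖ := huLip x1 hx1 x2 hx2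
    have htri : ‖pt1 - pt2‖ ≤ ‖pt1 - u x1‖ + ‖u x1 - u x2‖ + ‖u x2 - pt2‖ := by
      have heq : pt1 - pt2 = (pt1 - u x1) + (u x1 - u x2) + (u x2 - pt2) := by abel
      rw [heq]
      exact norm_add₃_le
    have hrev : ‖u x2 - pt2‖ = ‖pt2 - u x2‖ := norm_sub_rev _ _
    linarith
  · intro p1 hp1 p2 hp2 xt1 xt2 hin1 hin2
    have hd1 : ‖xt1 - v p1‖ ≤ Real.sqrt (2 * δ2 / σ1) :=
      inexact_dist hQ1cv hσ1 (hscΦ1 p1 hp1) (hv p1 hp1).1 (hv p1 hp1).2 hδ2 hin1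
    have hd2 : ‖xt2 - v p2‖ ≤ Real.sqrt (2 * δ2 / σ1) :=
      inexact_dist hQ1cv hσ1 (hscΦ1 p2 hp2) (hv p2 hp2).1 (hv p2 hp2).2 hδ2 hin2
    have hL : ‖v p1 - v p2‖ ≤ L1 * L2 / σ1 * ‖p1 - p2‖ := hvLip p1 hp1 p2 hp2
    have htri : ‖xt1 - xt2‖ ≤ ‖xt1 - v p1‖ + ‖v p1 - v p2‖ + ‖v p2 - xt2‖ := by
      have heq : xt1 - xt2 = (xt1 - v p1) + (v p1 - v p2) + (v p2 - xt2) := by abel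
      rw [heq]
      exact norm_add₃_le
    have hrev : ‖v p2 - xt2‖ = ‖xt2 - v p2‖ := norm_sub_rev _ _
    linarith
end

section
/- Let M be a real n×n matrix with σ_min(M) > 0, let t be a positive integer, let η_k > 0, and let π_k : ℝ^n → ℝ be τ_k-strongly concave w.r.t. ‖·‖₂ with τ_k > 0, for k = 1, …, K. Then the function f(X) = −Σ_{k=1}^K (1/η_k)·π_k(M^t x_k), defined for X = (x_1, …, x_K) ∈ (Δ_n)^K, is σ1-strongly convex on (Δ_n)^K w.r.t. the norm ‖X‖_F = (Σ_{k=1}^K ‖x_k‖₂²)^{1/2}, where σ1 = min_{1≤k≤K} (τ_k/η_k) · (σ_min(M))^{2t}. -/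
open Finset

/-- Euclidean norm on `ℝ^n`. -/
noncomputable def norm2 {n : ℕ} (x : Fin n → ℝ) : ℝ := Real.sqrt (∑ i, x i ^ 2)

/-- ℓ1-norm on `ℝ^K`. -/
def norm1 {K : ℕ} (p : Fin K → ℝ) : ℝ := ∑ k, |p k|

/-- Maximum norm on `ℝ^K`. -/
noncomputable def normInf {K : ℕ} (z : Fin K → ℝ) : ℝ := ⨆ k, |z k|

/-- The norm `‖X‖_F = (Σ_k ‖x_k‖₂²)^{1/2}` on tuples of vectors. -/
noncomputable def normF {n K : ℕ} (X : Fin K → Fin n → ℝ) : ℝ :=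
  Real.sqrt (∑ k, norm2 (X k) ^ 2)

/-- The norm `‖P‖_H = (Σ_i ‖p_i‖₁²)^{1/2}` on tuples of vectors. -/
noncomputable def normHP {K N : ℕ} (P : Fin N → Fin K → ℝ) : ℝ :=
  Real.sqrt (∑ i, norm1 (P i) ^ 2)

/-- The dual norm `‖Z‖_{H*} = (Σ_i ‖z_i‖_∞²)^{1/2}`. -/
noncomputable def normHstar {K N : ℕ} (Z : Fin N → Fin K → ℝ) : ℝ :=
  Real.sqrt (∑ i, normInf (Z i) ^ 2)

/-- Smallest singular value: `σ_min(M) = min_{‖x‖₂ = 1} ‖Mx‖₂`. -/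
noncomputable def sigmaMin {n : ℕ} (M : Matrix (Fin n) (Fin n) ℝ) : ℝ :=
  sInf {r | ∃ x : Fin n → ℝ, norm2 x = 1 ∧ r = norm2 (M.mulVec x)}

/-- Largest singular value: `σ_max(M) = max_{‖x‖₂ = 1} ‖Mx‖₂`. -/
noncomputable def sigmaMax {n : ℕ} (M : Matrix (Fin n) (Fin n) ℝ) : ℝ :=
  sSup {r | ∃ x : Fin n → ℝ, norm2 x = 1 ∧ r = norm2 (M.mulVec x)}

/-- Tuples of vectors all of whose components lie in the standard simplex `Δ_d`. -/
def prodSimplex (d c : ℕ) : Set (Fin c → Fin d → ℝ) :=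
  {Z | ∀ j, Z j ∈ stdSimplex ℝ (Fin d)}

/-- `zt` is a `δ`-inexact solution of `min_{z ∈ Q} F₀ z` (exact minimizer `zs`), the inner
product being the trace pairing on the matrix variables. -/
def InexactSolM {ι₁ ι₂ : Type*} [Fintype ι₁] [Fintype ι₂]
    (Q : Set (ι₁ → ι₂ → ℝ)) (F₀ : (ι₁ → ι₂ → ℝ) → ℝ) (zs zt : ι₁ → ι₂ → ℝ) (δ : ℝ) : Prop :=
  zt ∈ Q ∧ ∃ g : ι₁ → ι₂ → ℝ,
    (∀ y ∈ Q, F₀ zt + ∑ a, ∑ b, g a b * (y a b - zt a b) ≤ F₀ y) ∧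
    -δ ≤ ∑ a, ∑ b, g a b * (zs a b - zt a b)

lemma norm2_nonneg {n : ℕ} (x : Fin n → ℝ) : 0 ≤ norm2 x := Real.sqrt_nonneg _

lemma norm2_sq {n : ℕ} (x : Fin n → ℝ) : norm2 x ^ 2 = ∑ i, x i ^ 2 :=
  Real.sq_sqrt (Finset.sum_nonneg fun i _ => sq_nonneg _)

lemma norm2_zero {n : ℕ} : norm2 (0 : Fin n → ℝ) = 0 := by simp [norm2]

lemma norm2_smul {n : ℕ} (c : ℝ) (x : Fin n → ℝ) : norm2 (c • x) = |c| * norm2 x := by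
  unfold norm2
  have h : ∑ i, (c • x) i ^ 2 = c ^ 2 * ∑ i, x i ^ 2 := by
    simp [Finset.mul_sum, mul_pow]
  rw [h, Real.sqrt_mul (sq_nonneg c), Real.sqrt_sq_eq_abs]

lemma norm2_pos {n : ℕ} {x : Fin n → ℝ} (hx : x ≠ 0) : 0 < norm2 x := by
  rcases (norm2_nonneg x).lt_or_eq with h | h
  · exact h
  · exfalso
    apply hx
    have h2 : (∑ i, x i ^ 2) = 0 := by
      rw [← norm2_sq, ← h]; ring
    funext i
    have := (Finset.sum_eq_zero_iff_of_nonneg (fun i _ => sq_nonneg (x i))).1 h2 i (Finset.mem_univ i)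
    exact pow_eq_zero_iff (by norm_num) |>.1 this

lemma sigmaMin_mulVec_le {n : ℕ} (M : Matrix (Fin n) (Fin n) ℝ)
    (v : Fin n → ℝ) : sigmaMin M * norm2 v ≤ norm2 (M.mulVec v) := by
  by_cases hv : v = 0
  · simp [hv, Matrix.mulVec_zero, norm2_zero]
  · have hpos : 0 < norm2 v := norm2_pos hv
    have hunit : norm2 ((norm2 v)⁻¹ • v) = 1 := by
      rw [norm2_smul, abs_inv, abs_of_pos hpos]
      field_simp
    have hbdd : BddBelow {r | ∃ x : Fin n → ℝ, norm2 x = 1 ∧ r = norm2 (M.mulVec x)} :=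
      ⟨0, fun r ⟨y, _, hr⟩ => hr ▸ norm2_nonneg _⟩
    have h := csInf_le hbdd ⟨(norm2 v)⁻¹ • v, hunit, rfl⟩
    have heq : M.mulVec ((norm2 v)⁻¹ • v) = (norm2 v)⁻¹ • M.mulVec v := by
      rw [Matrix.mulVec_smul]
    rw [heq, norm2_smul, abs_inv, abs_of_pos hpos] at h
    calc sigmaMin M * norm2 v ≤ ((norm2 v)⁻¹ * norm2 (M.mulVec v)) * norm2 v :=
          mul_le_mul_of_nonneg_right h hpos.le
      _ = norm2 (M.mulVec v) := by field_simp

lemma sigmaMin_pow_mulVec_le {n : ℕ} (M : Matrix (Fin n) (Fin n) ℝ) (hM : 0 < sigmaMin M)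
    (t : ℕ) (v : Fin n → ℝ) : sigmaMin M ^ t * norm2 v ≤ norm2 ((M ^ t).mulVec v) := by
  induction t with
  | zero => simp [Matrix.one_mulVec]
  | succ t ih =>
    have h1 : (M ^ (t + 1)).mulVec v = M.mulVec ((M ^ t).mulVec v) := by
      rw [pow_succ']; rw [← Matrix.mulVec_mulVec]
    rw [h1, pow_succ]
    calc sigmaMin M ^ t * sigmaMin M * norm2 v
        = sigmaMin M * (sigmaMin M ^ t * norm2 v) := by ring
      _ ≤ sigmaMin M * norm2 ((M ^ t).mulVec v) := mul_le_mul_of_nonneg_left ih hM.le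
      _ ≤ norm2 (M.mulVec ((M ^ t).mulVec v)) := sigmaMin_mulVec_le M _

/-- the function `f(X) = -Σ_k (1/η_k)·π_k(M^t x_k)` is `σ1`-strongly convex on
`(Δ_n)^K` w.r.t. `‖·‖_F`, where `σ1 = min_k (τ_k/η_k) · σ_min(M)^{2t}`. -/
theorem organizations_objective_strongly_convex {n K : ℕ} (hn : 0 < n) (hK : 0 < K)
    (M : Matrix (Fin n) (Fin n) ℝ) (hM : 0 < sigmaMin M)
    (t : ℕ) (ht : 0 < t)
    (η τ : Fin K → ℝ) (hη : ∀ k, 0 < η k) (hτ : ∀ k, 0 < τ k)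
    (π : Fin K → (Fin n → ℝ) → ℝ)
    (hπ : ∀ k, StrongConvexOnW Set.univ norm2 (τ k) (fun y => -π k y)) :
    StrongConvexOnW (prodSimplex n K) normF
      ((⨅ k, τ k / η k) * sigmaMin M ^ (2 * t))
      (fun X => -∑ k, (1 / η k) * π k ((M ^ t).mulVec (X k))) := by
  haveI : Nonempty (Fin K) := ⟨⟨0, hK⟩⟩
  intro X hX Y hY α hα0 hα1
  simp only []
  set σ := sigmaMin M with hσ
  set Mt := M ^ t with hMtdef
  -- squared lower bound
  have key : ∀ v : Fin n → ℝ, σ ^ (2 * t) * norm2 v ^ 2 ≤ norm2 (Mt.mulVec v) ^ 2 := by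
    intro v
    have h := sigmaMin_pow_mulVec_le M hM t v
    have h0 : 0 ≤ σ ^ t * norm2 v := mul_nonneg (pow_pos hM t).le (norm2_nonneg v)
    calc σ ^ (2 * t) * norm2 v ^ 2 = (σ ^ t * norm2 v) ^ 2 := by
          rw [mul_comm 2 t, pow_mul]; ring
      _ ≤ norm2 (Mt.mulVec v) ^ 2 := pow_le_pow_left₀ h0 h 2
  have hinf_le : ∀ k, (⨅ j, τ j / η j) ≤ τ k / η k := fun k =>
    ciInf_le (Set.Finite.bddBelow (Set.finite_range _)) k
  -- per-k strong convexity
  have step1 : ∀ k, (1 / η k) * (-π k (Mt.mulVec ((α • X + (1 - α) • Y) k))) ≤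
      (1 / η k) * (α * (-π k (Mt.mulVec (X k))) + (1 - α) * (-π k (Mt.mulVec (Y k)))
        - α * (1 - α) * (τ k / 2) * norm2 (Mt.mulVec (X k) - Mt.mulVec (Y k)) ^ 2) := by
    intro k
    apply mul_le_mul_of_nonneg_left _ (one_div_nonneg.mpr (hη k).le)
    have h := hπ k (Set.mem_univ (Mt.mulVec (X k))) (Set.mem_univ (Mt.mulVec (Y k))) hα0 hα1
    simp only [] at h
    have harg : Mt.mulVec ((α • X + (1 - α) • Y) k)
        = α • Mt.mulVec (X k) + (1 - α) • Mt.mulVec (Y k) := by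
      have : (α • X + (1 - α) • Y) k = α • X k + (1 - α) • Y k := rfl
      rw [this, Matrix.mulVec_add, Matrix.mulVec_smul, Matrix.mulVec_smul]
    rw [harg]
    exact h
  have sum1 := Finset.sum_le_sum (fun k (_ : k ∈ Finset.univ) => step1 k)
  -- rewriting the two sides
  have neg_sum : ∀ Z : Fin K → Fin n → ℝ,
      -∑ k, (1 / η k) * π k (Mt.mulVec (Z k)) = ∑ k, (1 / η k) * (-π k (Mt.mulVec (Z k))) := by
    intro Z
    rw [← Finset.sum_neg_distrib]
    exact Finset.sum_congr rfl fun k _ => (mul_neg _ _).symm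
  -- split the RHS sum
  have split : ∑ k, (1 / η k) * (α * (-π k (Mt.mulVec (X k))) + (1 - α) * (-π k (Mt.mulVec (Y k)))
        - α * (1 - α) * (τ k / 2) * norm2 (Mt.mulVec (X k) - Mt.mulVec (Y k)) ^ 2)
      = α * ∑ k, (1 / η k) * (-π k (Mt.mulVec (X k)))
        + (1 - α) * ∑ k, (1 / η k) * (-π k (Mt.mulVec (Y k)))
        - ∑ k, (1 / η k) * (α * (1 - α) * (τ k / 2)
            * norm2 (Mt.mulVec (X k) - Mt.mulVec (Y k)) ^ 2) := by
    rw [Finset.mul_sum, Finset.mul_sum, ← Finset.sum_add_distrib, ← Finset.sum_sub_distrib]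
    exact Finset.sum_congr rfl fun k _ => by ring
  -- penalty bound
  have pen : α * (1 - α) * (((⨅ j, τ j / η j) * σ ^ (2 * t)) / 2) * normF (X - Y) ^ 2
      ≤ ∑ k, (1 / η k) * (α * (1 - α) * (τ k / 2)
          * norm2 (Mt.mulVec (X k) - Mt.mulVec (Y k)) ^ 2) := by
    have hnormF : normF (X - Y) ^ 2 = ∑ k, norm2 (X k - Y k) ^ 2 := by
      unfold normF
      rw [Real.sq_sqrt (Finset.sum_nonneg fun k _ => sq_nonneg _)]
      rfl
    rw [hnormF, Finset.mul_sum]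
    apply Finset.sum_le_sum
    intro k _
    have hd : Mt.mulVec (X k) - Mt.mulVec (Y k) = Mt.mulVec (X k - Y k) := by
      rw [Matrix.mulVec_sub]
    rw [hd]
    have hk : (⨅ j, τ j / η j) * (σ ^ (2 * t) * norm2 (X k - Y k) ^ 2)
        ≤ (τ k / η k) * norm2 (Mt.mulVec (X k - Y k)) ^ 2 := by
      calc (⨅ j, τ j / η j) * (σ ^ (2 * t) * norm2 (X k - Y k) ^ 2)
          ≤ (τ k / η k) * (σ ^ (2 * t) * norm2 (X k - Y k) ^ 2) :=
            mul_le_mul_of_nonneg_right (hinf_le k)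
              (mul_nonneg (pow_nonneg hM.le _) (sq_nonneg _))
        _ ≤ (τ k / η k) * norm2 (Mt.mulVec (X k - Y k)) ^ 2 :=
            mul_le_mul_of_nonneg_left (key _) (div_nonneg (hτ k).le (hη k).le)
    have hS : 0 ≤ α * (1 - α) := mul_nonneg hα0 (by linarith)
    have := mul_le_mul_of_nonneg_left hk (by positivity : (0:ℝ) ≤ α * (1 - α) / 2)
    have hη' : η k ≠ 0 := (hη k).ne'
    calc α * (1 - α) * (((⨅ j, τ j / η j) * σ ^ (2 * t)) / 2) * norm2 (X k - Y k) ^ 2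
        = α * (1 - α) / 2 * ((⨅ j, τ j / η j) * (σ ^ (2 * t) * norm2 (X k - Y k) ^ 2)) := by ring
      _ ≤ α * (1 - α) / 2 * ((τ k / η k) * norm2 (Mt.mulVec (X k - Y k)) ^ 2) := this
      _ = (1 / η k) * (α * (1 - α) * (τ k / 2) * norm2 (Mt.mulVec (X k - Y k)) ^ 2) := by
          field_simp
  rw [neg_sum, neg_sum, neg_sum]
  rw [split] at sum1
  linarith
end
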